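/- arXiv:2406.07035 — 2 statements merged into one kernel-verified Lean document; each statement's English description precedes it below -/
import Mathlib

section
/- Let H₀ be a real symmetric n×n matrix, x an index, λ not an eigenvalue of H₀ with ((H₀-λ)⁻¹)_{xx} ≠ 0, and set v = -1/((H₀-λ)⁻¹)_{xx}, H = H₀ + v e_x e_x^T. Then the eigenspace of H for eigenvalue λ containing a vector with nonzero x-coordinate is one-dimensional, spanned by (H₀-λ)⁻¹ e_x; any eigenvector ψ of H with eigenvalue λ and ψ(x) = 0 is also an eigenvector of H₀. -/
/-!
With `A = H₀ - λ`, the eigenvalue equation `(H₀ + v eₓeₓᵀ) ψ = λ ψ` reads `A ψ = -v ψ(x) eₓ`.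
Inverting `A` gives `ψ = -v ψ(x) A⁻¹ eₓ`, and when `ψ(x) = 0` it gives `A ψ = 0`, i.e. `H₀ ψ = λ ψ`.
-/

namespace Matrix

variable {n R : Type*} [Fintype n] [DecidableEq n] [CommRing R]

theorem vecMulVec_single_one_mulVec (i : n) (ψ : n → R) :
    vecMulVec (Pi.single i 1) (Pi.single i 1) *ᵥ ψ = ψ i • Pi.single i 1 := by
  rw [vecMulVec_mulVec, single_dotProduct, one_mul, op_smul_eq_smul]

theorem sub_smul_one_mulVec_of_add_rankOne_mulVec_eq (H₀ : Matrix n n R) (i : n) (v lam : R)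
    (ψ : n → R) (hψ : (H₀ + v • vecMulVec (Pi.single i 1) (Pi.single i 1)) *ᵥ ψ = lam • ψ) :
    (H₀ - lam • 1) *ᵥ ψ = -(v * ψ i) • Pi.single i 1 := by
  rw [add_mulVec, smul_mulVec, vecMulVec_single_one_mulVec, smul_smul] at hψ
  rw [sub_mulVec, smul_mulVec, one_mulVec, ← hψ, neg_smul]
  abel

theorem eq_smul_inv_mulVec_of_mulVec_eq_smul {A : Matrix n n R} (hA : IsUnit A.det)
    {ψ b : n → R} {c : R} (h : A *ᵥ ψ = c • b) : ψ = c • A⁻¹ *ᵥ b := by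
  rw [← mulVec_smul, ← h, mulVec_mulVec, nonsing_inv_mul A hA, one_mulVec]

end Matrix

theorem stmt11_general {n : ℕ} (H₀ : Matrix (Fin n) (Fin n) ℝ)
    (x : Fin n) (lam : ℝ)
    (hinv : IsUnit (H₀ - lam • (1 : Matrix (Fin n) (Fin n) ℝ)).det)
    (v : ℝ)
    (ψ : Fin n → ℝ)
    (hψ : (H₀ + v • Matrix.vecMulVec (Pi.single x 1) (Pi.single x 1)).mulVec ψ = lam • ψ) :
    (ψ x ≠ 0 → ∃ c : ℝ,
      ψ = c • (H₀ - lam • (1 : Matrix (Fin n) (Fin n) ℝ))⁻¹.mulVec (Pi.single x 1)) ∧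
    (ψ x = 0 → H₀.mulVec ψ = lam • ψ) := by
  have hA := Matrix.sub_smul_one_mulVec_of_add_rankOne_mulVec_eq H₀ x v lam ψ hψ
  refine ⟨fun _ => ⟨_, Matrix.eq_smul_inv_mulVec_of_mulVec_eq_smul hinv hA⟩, fun hx => ?_⟩
  rwa [hx, mul_zero, neg_zero, zero_smul, Matrix.sub_mulVec, Matrix.smul_mulVec, Matrix.one_mulVec,
    sub_eq_zero] at hA

/-- For the rank-one construction with `v = -1/((H₀-λ)⁻¹)ₓₓ` and
`H = H₀ + v eₓeₓᵀ`: every λ-eigenvector of `H` with nonzero `x`-coordinate is a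
scalar multiple of `(H₀-λ)⁻¹eₓ`, and every λ-eigenvector with vanishing
`x`-coordinate is also an eigenvector of `H₀`. -/
theorem stmt11 {n : ℕ} (H₀ : Matrix (Fin n) (Fin n) ℝ) (hsym : H₀.IsSymm)
    (x : Fin n) (lam : ℝ)
    (hinv : IsUnit (H₀ - lam • (1 : Matrix (Fin n) (Fin n) ℝ)).det)
    (hxx : (H₀ - lam • (1 : Matrix (Fin n) (Fin n) ℝ))⁻¹ x x ≠ 0)
    (v : ℝ) (hv : v = -((H₀ - lam • (1 : Matrix (Fin n) (Fin n) ℝ))⁻¹ x x)⁻¹)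
    (ψ : Fin n → ℝ)
    (hψ : (H₀ + v • Matrix.vecMulVec (Pi.single x 1) (Pi.single x 1)).mulVec ψ = lam • ψ) :
    (ψ x ≠ 0 → ∃ c : ℝ,
      ψ = c • (H₀ - lam • (1 : Matrix (Fin n) (Fin n) ℝ))⁻¹.mulVec (Pi.single x 1)) ∧
    (ψ x = 0 → H₀.mulVec ψ = lam • ψ) :=
  stmt11_general H₀ x lam hinv v ψ hψ
end

section
/- Let H₀ be a real symmetric n×n matrix with eigenvalues μ₁ < ⋯ < μ_{n-1} restricted appropriately; fix index x and let λ lie strictly between two consecutive eigenvalues of the principal submatrix H|_{Λ∖{x}} (equivalently in an interval where v ↦ λ_i(v) is a bijection). Then the change of variables v ↦ λ_i(H₀ + v e_x e_x^T) is a C¹ diffeomorphism from ℝ onto the open interval (μ_{i-1}^{(x)}, μ_i^{(x)}) between consecutive eigenvalues of the deleted submatrix, with derivative |φ_{λ_i}(x)|². -/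
/-!
Put row and column `x` first, `H₀ = [[d, hᵀ], [h, A]]`. For `λ` outside the spectrum of `A`, the
lower block of the eigenvalue equation forces `φ ∘ succAbove x = φ(x) (λ - A)⁻¹ h`, and the top row
then reads `v = F(λ) := λ - d - ⟪h, (λ - A)⁻¹ h⟫`. So `F` is a left inverse of `v ↦ λ(v)`. By the
resolvent identity `F' = 1 + ‖(λ - A)⁻¹ h‖² > 0` on `(a, b)`, hence `F` is strictly increasing
there and `λ(·)` is its inverse; the normalization `φ(x)² (1 + ‖(λ - A)⁻¹ h‖²) = 1` identifies
`1 / F'(λ(v))` with `φ(x)²`.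
-/

open Matrix Set Filter Topology

lemma Matrix.IsSymm.mulVec_dotProduct {ι R : Type*} [Fintype ι] [CommSemiring R]
    {M : Matrix ι ι R} (hM : M.IsSymm) (u v : ι → R) : M *ᵥ u ⬝ᵥ v = u ⬝ᵥ M *ᵥ v := by
  rw [dotProduct_mulVec, ← vecMul_transpose, hM.eq, dotProduct_comm]

section Resolvent

variable {ι : Type*} [Fintype ι] [DecidableEq ι] {A : Matrix ι ι ℝ} {s t : ℝ}

noncomputable def resolventVec (A : Matrix ι ι ℝ) (h : ι → ℝ) (t : ℝ) : ι → ℝ :=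
  (t • 1 - A)⁻¹ *ᵥ h

lemma det_smul_one_sub_ne_zero (hA : ∀ u, A *ᵥ u = t • u → u = 0) : (t • 1 - A).det ≠ 0 := by
  intro hdet
  obtain ⟨u, hu0, hu⟩ := exists_mulVec_eq_zero_iff.2 hdet
  refine hu0 (hA u ?_)
  rw [sub_mulVec, smul_mulVec, one_mulVec, sub_eq_zero] at hu
  exact hu.symm

lemma smul_one_sub_mulVec_resolventVec (h : ι → ℝ) (ht : (t • 1 - A).det ≠ 0) :
    (t • 1 - A) *ᵥ resolventVec A h t = h := by
  rw [resolventVec, mulVec_mulVec, mul_nonsing_inv _ ht.isUnit, one_mulVec]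

lemma eq_resolventVec_of_mulVec_eq {u h : ι → ℝ} (ht : (t • 1 - A).det ≠ 0)
    (hu : (t • 1 - A) *ᵥ u = h) : u = resolventVec A h t := by
  rw [resolventVec, ← hu, mulVec_mulVec, nonsing_inv_mul _ ht.isUnit, one_mulVec]

lemma isOpen_setOf_det_smul_one_sub_ne_zero (A : Matrix ι ι ℝ) :
    IsOpen {t : ℝ | (t • 1 - A).det ≠ 0} :=
  isOpen_ne.preimage (by fun_prop)

lemma continuousAt_resolventVec (h : ι → ℝ) (ht : (t • 1 - A).det ≠ 0) :
    ContinuousAt (resolventVec A h) t := by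
  have hinv : ContinuousAt (fun s : ℝ => (s • 1 - A)⁻¹) t := by
    refine ContinuousAt.comp (g := Inv.inv) ?_ (by fun_prop)
    exact continuousAt_matrix_inv _ (Ring.inverse_eq_inv' (G₀ := ℝ) ▸ continuousAt_inv₀ ht)
  exact (continuous_id.matrix_mulVec continuous_const).continuousAt.comp hinv

/-- The resolvent identity `R(s) - R(t) = (t - s) R(t) R(s)`, tested against `h`. -/
lemma dotProduct_resolventVec_sub (hA : A.IsSymm) (h : ι → ℝ) (hs : (s • 1 - A).det ≠ 0)
    (ht : (t • 1 - A).det ≠ 0) :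
    h ⬝ᵥ resolventVec A h s - h ⬝ᵥ resolventVec A h t =
      (t - s) * (resolventVec A h t ⬝ᵥ resolventVec A h s) := by
  set ws := resolventVec A h s
  set wt := resolventVec A h t
  have hsymm : (t • 1 - A).IsSymm := (isSymm_one.smul t).sub hA
  calc h ⬝ᵥ ws - h ⬝ᵥ wt
      = (t • 1 - A) *ᵥ wt ⬝ᵥ ws - (s • 1 - A) *ᵥ ws ⬝ᵥ wt := by
        rw [smul_one_sub_mulVec_resolventVec h hs, smul_one_sub_mulVec_resolventVec h ht]
    _ = wt ⬝ᵥ ((t • 1 - A) - (s • 1 - A)) *ᵥ ws := by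
        rw [hsymm.mulVec_dotProduct, dotProduct_comm _ wt, ← dotProduct_sub, ← sub_mulVec]
    _ = (t - s) * (wt ⬝ᵥ ws) := by
        rw [sub_sub_sub_cancel_right, ← sub_smul, smul_mulVec, one_mulVec, dotProduct_smul,
          smul_eq_mul]

lemma hasDerivAt_dotProduct_resolventVec (hA : A.IsSymm) (h : ι → ℝ)
    (ht : (t • 1 - A).det ≠ 0) :
    HasDerivAt (fun s => h ⬝ᵥ resolventVec A h s)
      (-(resolventVec A h t ⬝ᵥ resolventVec A h t)) t := by
  rw [hasDerivAt_iff_tendsto_slope]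
  have hslope : (fun s => -(resolventVec A h t ⬝ᵥ resolventVec A h s)) =ᶠ[𝓝[≠] t]
      slope (fun s => h ⬝ᵥ resolventVec A h s) t := by
    filter_upwards [self_mem_nhdsWithin,
      nhdsWithin_le_nhds ((isOpen_setOf_det_smul_one_sub_ne_zero A).mem_nhds ht)] with s hst hs
    rw [slope_def_field, dotProduct_resolventVec_sub hA h hs ht]
    field_simp [sub_ne_zero.2 hst]
    ring
  refine Tendsto.congr' hslope (Tendsto.mono_left ?_ nhdsWithin_le_nhds)
  exact ((continuous_const.dotProduct continuous_id).continuousAt.comp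
    (continuousAt_resolventVec h ht)).neg

end Resolvent

section DeletedSubmatrix

variable {n : ℕ} (H : Matrix (Fin (n + 1)) (Fin (n + 1)) ℝ) (x : Fin (n + 1))

def colExcept : Fin n → ℝ := fun i => H (x.succAbove i) x

/-- Writing `H = [[H x x, hᵀ], [h, A]]` with `A` the submatrix with row and column `x` deleted
and `h = colExcept H x`, a number `t` outside the spectrum of `A` is an eigenvalue of
`H + v • eₓeₓᵀ` exactly when `v = secularFun H x t`. -/
noncomputable def secularFun (t : ℝ) : ℝ :=
  t - H x x - colExcept H x ⬝ᵥ resolventVec (H.submatrix x.succAbove x.succAbove) (colExcept H x) t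

variable {H x} {φ : Fin (n + 1) → ℝ} {v t : ℝ}

lemma add_smul_vecMulVec_single_mulVec (v : ℝ) (φ : Fin (n + 1) → ℝ) :
    (H + v • vecMulVec (Pi.single x 1) (Pi.single x 1)) *ᵥ φ =
      H *ᵥ φ + (v * φ x) • Pi.single x 1 := by
  rw [add_mulVec, smul_mulVec, vecMulVec_mulVec, single_dotProduct, one_mul, op_smul_eq_smul,
    smul_smul]

lemma mulVec_apply_eq_add_sum_succAbove (H : Matrix (Fin (n + 1)) (Fin (n + 1)) ℝ)
    (x : Fin (n + 1)) (φ : Fin (n + 1) → ℝ) (y : Fin (n + 1)) :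
    (H *ᵥ φ) y = H y x * φ x + ∑ i, H y (x.succAbove i) * φ (x.succAbove i) :=
  Fin.sum_univ_succAbove _ x

lemma smul_one_sub_submatrix_mulVec_comp_succAbove
    (heig : (H + v • vecMulVec (Pi.single x 1) (Pi.single x 1)) *ᵥ φ = t • φ) :
    (t • 1 - H.submatrix x.succAbove x.succAbove) *ᵥ (φ ∘ x.succAbove) = φ x • colExcept H x := by
  ext i
  have hi := congrFun heig (x.succAbove i)
  rw [add_smul_vecMulVec_single_mulVec, Pi.add_apply, mulVec_apply_eq_add_sum_succAbove H x,
    Pi.smul_apply, Pi.smul_apply, Pi.single_eq_of_ne (x.succAbove_ne i), smul_zero] at hi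
  rw [sub_mulVec, smul_mulVec, one_mulVec]
  change t * φ (x.succAbove i) - ∑ j, H (x.succAbove i) (x.succAbove j) * φ (x.succAbove j) =
    φ x * H (x.succAbove i) x
  rw [smul_eq_mul] at hi
  linarith

lemma comp_succAbove_eq_smul_resolventVec
    (heig : (H + v • vecMulVec (Pi.single x 1) (Pi.single x 1)) *ᵥ φ = t • φ)
    (ht : (t • 1 - H.submatrix x.succAbove x.succAbove).det ≠ 0) :
    φ ∘ x.succAbove =
      φ x • resolventVec (H.submatrix x.succAbove x.succAbove) (colExcept H x) t := by
  rw [eq_resolventVec_of_mulVec_eq ht (smul_one_sub_submatrix_mulVec_comp_succAbove heig),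
    resolventVec, resolventVec, mulVec_smul]

lemma secularFun_eq_of_mulVec_eq (hH : H.IsSymm)
    (heig : (H + v • vecMulVec (Pi.single x 1) (Pi.single x 1)) *ᵥ φ = t • φ) (hx : φ x ≠ 0)
    (hφ : φ ∘ x.succAbove =
      φ x • resolventVec (H.submatrix x.succAbove x.succAbove) (colExcept H x) t) :
    secularFun H x t = v := by
  set w := resolventVec (H.submatrix x.succAbove x.succAbove) (colExcept H x) t
  have hrow := congrFun heig x
  rw [add_smul_vecMulVec_single_mulVec, Pi.add_apply, mulVec_apply_eq_add_sum_succAbove H x,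
    Pi.smul_apply, Pi.smul_apply, Pi.single_eq_same] at hrow
  have hsum : ∑ i, H x (x.succAbove i) * φ (x.succAbove i) = φ x * (colExcept H x ⬝ᵥ w) := by
    rw [dotProduct, Finset.mul_sum]
    refine Finset.sum_congr rfl fun i _ => ?_
    rw [show φ (x.succAbove i) = φ x * w i from congrFun hφ i, colExcept, hH.apply]
    ring
  rw [hsum, smul_eq_mul, smul_eq_mul, mul_one] at hrow
  have hcancel : φ x * (secularFun H x t - v) = 0 := by
    rw [secularFun]
    linear_combination -hrow
  exact sub_eq_zero.1 ((mul_eq_zero.1 hcancel).resolve_left hx)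

lemma sum_sq_eq_of_comp_succAbove {w : Fin n → ℝ} (hφ : φ ∘ x.succAbove = φ x • w) :
    ∑ y, φ y ^ 2 = φ x ^ 2 * (1 + w ⬝ᵥ w) := by
  have hφi (i : Fin n) : φ (x.succAbove i) = φ x * w i := congrFun hφ i
  simp only [Fin.sum_univ_succAbove _ x, hφi, mul_pow, ← Finset.mul_sum, dotProduct, ← sq]
  ring

lemma hasDerivAt_secularFun (hH : H.IsSymm)
    (ht : (t • 1 - H.submatrix x.succAbove x.succAbove).det ≠ 0) :
    HasDerivAt (secularFun H x)
      (1 + resolventVec (H.submatrix x.succAbove x.succAbove) (colExcept H x) t ⬝ᵥ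
        resolventVec (H.submatrix x.succAbove x.succAbove) (colExcept H x) t) t := by
  have := ((hasDerivAt_id t).sub_const (H x x)).sub
    (hasDerivAt_dotProduct_resolventVec (hH.submatrix _) (colExcept H x) ht)
  rwa [sub_neg_eq_add] at this

end DeletedSubmatrix

section InverseFunction

variable {F F' g : ℝ → ℝ} {s : Set ℝ}

lemma strictMonoOn_of_hasDerivAt_pos (hs : Convex ℝ s) (hso : IsOpen s)
    (hF : ∀ t ∈ s, HasDerivAt F (F' t) t) (hpos : ∀ t ∈ s, 0 < F' t) : StrictMonoOn F s :=
  strictMonoOn_of_deriv_pos hs (fun t ht => (hF t ht).continuousAt.continuousWithinAt)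
    fun t ht => by
      rw [hso.interior_eq] at ht
      rw [(hF t ht).deriv]
      exact hpos t ht

lemma StrictMonoOn.strictMono_of_leftInverse (hF : StrictMonoOn F s) (hg : ∀ v, g v ∈ s)
    (hFg : ∀ v, F (g v) = v) : StrictMono g :=
  fun v w hvw => (hF.lt_iff_lt (hg v) (hg w)).1 (by rwa [hFg, hFg])

lemma Set.InjOn.range_eq_of_leftInverse (hF : InjOn F s) (hg : ∀ v, g v ∈ s)
    (hFg : ∀ v, F (g v) = v) : range g = s :=
  Subset.antisymm (range_subset_iff.2 hg) fun t ht => ⟨F t, hF (hg _) ht (hFg _)⟩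

lemma contDiff_one_of_hasDerivAt (hg : ∀ v, HasDerivAt g (F' v) v) (hF' : Continuous F') :
    ContDiff ℝ 1 g :=
  contDiff_one_iff_deriv.2
    ⟨fun v => (hg v).differentiableAt, by rwa [funext fun v => (hg v).deriv]⟩

end InverseFunction

theorem stmt14_general {n : ℕ} (H₀ : Matrix (Fin (n + 1)) (Fin (n + 1)) ℝ)
    (hsym : H₀.IsSymm) (x : Fin (n + 1))
    (lam : ℝ → ℝ) (φ : ℝ → Fin (n + 1) → ℝ) (a b : ℝ)
    (heig : ∀ v, (H₀ + v • Matrix.vecMulVec (Pi.single x 1) (Pi.single x 1)).mulVec (φ v)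
      = lam v • φ v)
    (hnorm : ∀ v, ∑ y, (φ v y) ^ 2 = 1)
    (hx : ∀ v, φ v x ≠ 0)
    (hcont : Continuous lam)
    (hin : ∀ v, lam v ∈ Set.Ioo a b)
    (hgap : ∀ t ∈ Set.Ioo a b, ∀ u : Fin n → ℝ,
      (H₀.submatrix (Fin.succAbove x) (Fin.succAbove x)).mulVec u = t • u → u = 0) :
    ContDiff ℝ 1 lam ∧ StrictMono lam ∧ Set.range lam = Set.Ioo a b ∧
      ∀ v, HasDerivAt lam ((φ v x) ^ 2) v := by
  set A := H₀.submatrix x.succAbove x.succAbove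
  set w := resolventVec A (colExcept H₀ x)
  have hdet (t : ℝ) (ht : t ∈ Ioo a b) : (t • 1 - A).det ≠ 0 :=
    det_smul_one_sub_ne_zero (hgap t ht)
  have hφ (v : ℝ) : φ v ∘ x.succAbove = φ v x • w (lam v) :=
    comp_succAbove_eq_smul_resolventVec (heig v) (hdet _ (hin v))
  have hFlam (v : ℝ) : secularFun H₀ x (lam v) = v :=
    secularFun_eq_of_mulVec_eq hsym (heig v) (hx v) (hφ v)
  have hφx (v : ℝ) : φ v x ^ 2 = (1 + w (lam v) ⬝ᵥ w (lam v))⁻¹ :=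
    eq_inv_of_mul_eq_one_left ((sum_sq_eq_of_comp_succAbove (hφ v)).symm.trans (hnorm v))
  have hpos (t : ℝ) : 0 < 1 + w t ⬝ᵥ w t :=
    add_pos_of_pos_of_nonneg one_pos (Finset.sum_nonneg fun i _ => mul_self_nonneg _)
  have hF (t : ℝ) (ht : t ∈ Ioo a b) : HasDerivAt (secularFun H₀ x) (1 + w t ⬝ᵥ w t) t :=
    hasDerivAt_secularFun hsym (hdet t ht)
  have hFmono : StrictMonoOn (secularFun H₀ x) (Ioo a b) :=
    strictMonoOn_of_hasDerivAt_pos (convex_Ioo a b) isOpen_Ioo hF fun t _ => hpos t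
  have hderiv (v : ℝ) : HasDerivAt lam (1 + w (lam v) ⬝ᵥ w (lam v))⁻¹ v :=
    (hF _ (hin v)).of_local_left_inverse hcont.continuousAt (hpos _).ne'
      (Eventually.of_forall hFlam)
  have hw : Continuous fun v => w (lam v) := continuous_iff_continuousAt.2 fun v =>
    (continuousAt_resolventVec _ (hdet _ (hin v))).comp hcont.continuousAt
  refine ⟨contDiff_one_of_hasDerivAt hderiv
      ((continuous_const.add (hw.dotProduct hw)).inv₀ fun v => (hpos _).ne'),
    hFmono.strictMono_of_leftInverse hin hFlam, hFmono.injOn.range_eq_of_leftInverse hin hFlam,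
    fun v => ?_⟩
  rw [hφx]
  exact hderiv v

/-- The change of variables `v ↦ λᵢ(H₀ + v eₓeₓᵀ)`: along a continuous simple
eigenvalue branch `λ(v)` with normalized eigenvector `φ(v)` not vanishing at
`x`, lying between two consecutive eigenvalues `a < b` of the principal
submatrix with row/column `x` deleted (and avoiding its spectrum), the map
`v ↦ λ(v)` is `C¹`, strictly increasing, maps `ℝ` onto `(a,b)`, and has
derivative `|φ(v)(x)|²`. -/
theorem stmt14 {n : ℕ} (H₀ : Matrix (Fin (n + 1)) (Fin (n + 1)) ℝ)
    (hsym : H₀.IsSymm) (x : Fin (n + 1))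
    (lam : ℝ → ℝ) (φ : ℝ → Fin (n + 1) → ℝ) (a b : ℝ) (hab : a < b)
    (heig : ∀ v, (H₀ + v • Matrix.vecMulVec (Pi.single x 1) (Pi.single x 1)).mulVec (φ v)
      = lam v • φ v)
    (hnorm : ∀ v, ∑ y, (φ v y) ^ 2 = 1)
    (hx : ∀ v, φ v x ≠ 0)
    (hsimple : ∀ v (ψ : Fin (n + 1) → ℝ),
      (H₀ + v • Matrix.vecMulVec (Pi.single x 1) (Pi.single x 1)).mulVec ψ = lam v • ψ →
        ∃ c : ℝ, ψ = c • φ v)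
    (hcont : Continuous lam)
    (ha : ∃ ua : Fin n → ℝ, ua ≠ 0 ∧
      (H₀.submatrix (Fin.succAbove x) (Fin.succAbove x)).mulVec ua = a • ua)
    (hb : ∃ ub : Fin n → ℝ, ub ≠ 0 ∧
      (H₀.submatrix (Fin.succAbove x) (Fin.succAbove x)).mulVec ub = b • ub)
    (hin : ∀ v, lam v ∈ Set.Ioo a b)
    (hgap : ∀ t ∈ Set.Ioo a b, ∀ u : Fin n → ℝ,
      (H₀.submatrix (Fin.succAbove x) (Fin.succAbove x)).mulVec u = t • u → u = 0) :
    ContDiff ℝ 1 lam ∧ StrictMono lam ∧ Set.range lam = Set.Ioo a b ∧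
      ∀ v, HasDerivAt lam ((φ v x) ^ 2) v :=
  stmt14_general H₀ hsym x lam φ a b heig hnorm hx hcont hin hgap
end
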